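/- arXiv:1304.8029 — 3 statements merged into one kernel-verified Lean document; each statement's English description precedes it below -/
import Mathlib

section
/- Let A, B be real m×n matrices with B injective (full column rank), and Q an n×n positive definite matrix. If A has full column rank, then the Schur complement S = AᵀA - AᵀB(BᵀB + Q)⁻¹BᵀA is positive definite. -/
/-!
By the Woodbury identity, `1 - B (BᴴB + Q)⁻¹ Bᴴ = (1 + B Q⁻¹ Bᴴ)⁻¹`, the inverse of a positive
definite matrix. The Schur complement is `Aᴴ (1 - B (BᴴB + Q)⁻¹ Bᴴ) A`, hence positive definite as
soon as `A` is injective.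
-/

open Matrix
open scoped ComplexOrder

namespace Matrix

variable {𝕜 m n : Type*} [RCLike 𝕜] [Fintype m] [Fintype n] [DecidableEq m] [DecidableEq n]

theorem inv_one_add_mul_inv_mul_conjTranspose {Q : Matrix n n 𝕜} (hQ : Q.PosDef)
    (B : Matrix m n 𝕜) :
    (1 + B * Q⁻¹ * Bᴴ)⁻¹ = 1 - B * (Bᴴ * B + Q)⁻¹ * Bᴴ := by
  have hQQ : Q⁻¹⁻¹ = Q := nonsing_inv_nonsing_inv Q ((isUnit_iff_isUnit_det Q).mp hQ.isUnit)
  have hM : (Bᴴ * B + Q).PosDef := hQ.posSemidef_add (posSemidef_conjTranspose_mul_self B)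
  rw [add_mul_mul_inv_eq_sub 1 B Q⁻¹ Bᴴ isUnit_one hQ.inv.isUnit
    (by simpa [hQQ, add_comm] using hM.isUnit)]
  simp [hQQ, add_comm]

theorem PosDef.one_sub_mul_inv_mul_conjTranspose {Q : Matrix n n 𝕜} (hQ : Q.PosDef)
    (B : Matrix m n 𝕜) :
    (1 - B * (Bᴴ * B + Q)⁻¹ * Bᴴ).PosDef := by
  rw [← inv_one_add_mul_inv_mul_conjTranspose hQ B]
  exact (PosDef.one.add_posSemidef (hQ.inv.posSemidef.mul_mul_conjTranspose_same B)).inv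

end Matrix

theorem stmt4_general {m n : ℕ} (A B : Matrix (Fin m) (Fin n) ℝ) (Q : Matrix (Fin n) (Fin n) ℝ)
    (hA : Function.Injective A.mulVecLin)
    (hQ : Q.PosDef) :
    (Aᵀ * A - Aᵀ * B * (Bᵀ * B + Q)⁻¹ * Bᵀ * A).PosDef := by
  have hS : Aᵀ * A - Aᵀ * B * (Bᵀ * B + Q)⁻¹ * Bᵀ * A
      = Aᴴ * (1 - B * (Bᴴ * B + Q)⁻¹ * Bᴴ) * A := by
    simp only [conjTranspose_eq_transpose_of_trivial, Matrix.mul_sub, Matrix.sub_mul,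
      Matrix.mul_one, Matrix.mul_assoc]
  rw [hS]
  exact (hQ.one_sub_mul_inv_mul_conjTranspose B).conjTranspose_mul_mul_same hA

/-- If `A` and `B` have full column rank and `Q` is positive definite, the Schur complement
`AᵀA - AᵀB (BᵀB + Q)⁻¹ Bᵀ A` is positive definite. -/
theorem stmt4 {m n : ℕ} (A B : Matrix (Fin m) (Fin n) ℝ) (Q : Matrix (Fin n) (Fin n) ℝ)
    (hA : Function.Injective A.mulVecLin)
    (hB : Function.Injective B.mulVecLin)
    (hQ : Q.PosDef) :
    (Aᵀ * A - Aᵀ * B * (Bᵀ * B + Q)⁻¹ * Bᵀ * A).PosDef :=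
  stmt4_general A B Q hA hQ
end

section
/- For the matrices A_{ij} and B_{ij} defined in the paper (built from time-stamp vectors and the ML delay-estimate coefficients), the Gram identity A_{ji}ᵀA_{ji} = B_{ij}ᵀB_{ij} holds. -/
open Matrix

/-! `A_{ji}` is `B_{ij}` with its two row blocks exchanged, and a Gram matrix `Mᵀ M` does not
change when the rows of `M` are permuted. -/

theorem Matrix.transpose_mul_self_submatrix_equiv {m m' n R : Type*} [Fintype m] [Fintype m']
    [CommSemiring R] (M : Matrix m n R) (e : m' ≃ m) :
    (M.submatrix e id)ᵀ * M.submatrix e id = Mᵀ * M := by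
  rw [transpose_submatrix, submatrix_mul_equiv, submatrix_id_id]

theorem stmt13_general {K L : ℕ} (cij : Fin K → ℝ) (ctji : Fin L → ℝ) (aj bij : ℝ)
    (Aji : Matrix (Fin L ⊕ Fin K) (Fin 2) ℝ)
    (Bij : Matrix (Fin K ⊕ Fin L) (Fin 2) ℝ)
    (hAji : ∀ r c, Aji r c =
      Sum.elim (fun l => ![-(ctji l) + aj, 1 + -bij])
               (fun k => ![cij k + aj, -1 + -bij]) r c)
    (hBij : ∀ r c, Bij r c =
      Sum.elim (fun k => ![cij k + aj, -1 + -bij])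
               (fun l => ![-(ctji l) + aj, 1 + -bij]) r c) :
    Ajiᵀ * Aji = Bijᵀ * Bij := by
  have hswap : Aji = Bij.submatrix (Equiv.sumComm (Fin L) (Fin K)) id := by
    ext (l | k) c <;> simp [hAji, hBij]
  rw [hswap, transpose_mul_self_submatrix_equiv]

/-- Gram identity `A_{ji}ᵀ A_{ji} = B_{ij}ᵀ B_{ij}` for the measurement matrices of the
paper (Eq. (8)), with `A_{ij} = [[-c̃_{i→j}, 1], [c_{j→i}, -1]] + [a_i, b_{ij}] ⊗ 1`,
`B_{ij} = [[c_{i→j}, -1], [-c̃_{j→i}, 1]] + [a_j, -b_{ij}] ⊗ 1`, and `A_{ji}` obtained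
from `A_{ij}` by swapping the roles of `i` and `j` (with `b_{ji} = -b_{ij}`). -/
theorem stmt13 {K L : ℕ} (ctij cij : Fin K → ℝ) (ctji cji : Fin L → ℝ) (ai aj bij : ℝ)
    (Aij : Matrix (Fin K ⊕ Fin L) (Fin 2) ℝ)
    (Aji : Matrix (Fin L ⊕ Fin K) (Fin 2) ℝ)
    (Bij : Matrix (Fin K ⊕ Fin L) (Fin 2) ℝ)
    (hAij : ∀ r c, Aij r c =
      Sum.elim (fun k => ![-(ctij k) + ai, 1 + bij])
               (fun l => ![cji l + ai, -1 + bij]) r c)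
    (hAji : ∀ r c, Aji r c =
      Sum.elim (fun l => ![-(ctji l) + aj, 1 + -bij])
               (fun k => ![cij k + aj, -1 + -bij]) r c)
    (hBij : ∀ r c, Bij r c =
      Sum.elim (fun k => ![cij k + aj, -1 + -bij])
               (fun l => ![-(ctji l) + aj, 1 + -bij]) r c) :
    Ajiᵀ * Aji = Bijᵀ * Bij :=
  stmt13_general cij ctji aj bij Aji Bij hAji hBij
end

section
/- Let J be a symmetric positive definite matrix partitioned into blocks with J_xx and J_yy square. Then the spectral radius of J_xx⁻¹ J_xy J_yy⁻¹ J_yx is strictly less than 1. -/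
/-!
Let `z` be an eigenvalue of `A⁻¹ S`, where `S = B D⁻¹ Bᴴ`, with eigenvector `v`. Then
`vᴴ S v = z · vᴴ A v`, and `vᴴ S v ≥ 0` while `vᴴ (A - S) v > 0` because `A - S` is the Schur
complement of `D` in the positive definite block matrix. Hence `z = vᴴ S v / vᴴ A v ∈ [0, 1)`.
Complex eigenvalues of the real matrix are handled by complexifying the block matrix, which stays
positive definite since `vᴴ A v = aᵀ A a + bᵀ A b` for `v = a + i b`.
-/

open Matrix
open scoped ComplexOrder

theorem RCLike.norm_lt_one_of_eq_mul {𝕜 : Type*} [RCLike 𝕜] {z p q : 𝕜} (hq : 0 ≤ q)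
    (hqp : q < p) (h : q = z * p) : ‖z‖ < 1 := by
  have hp : 0 < p := hq.trans_lt hqp
  have hnorm : ‖q‖ < ‖p‖ := by
    rw [← RCLike.ofReal_lt_ofReal (K := 𝕜), RCLike.norm_of_nonneg' hq,
      RCLike.norm_of_nonneg' hp.le]
    exact hqp
  rw [h, norm_mul] at hnorm
  exact (mul_lt_iff_lt_one_left (norm_pos_iff.mpr hp.ne')).mp hnorm

namespace Matrix

variable {n : Type*} [Fintype n]

theorem map_nonsing_inv {K L : Type*} [Field K] [Field L] [DecidableEq n] (f : K →+* L)
    (A : Matrix n n K) : A⁻¹.map f = (A.map f)⁻¹ := by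
  have hadj : A.adjugate.map f = (A.map f).adjugate := f.map_adjugate A
  have hdet : f A.det = (A.map f).det := f.map_det A
  ext i j
  simp [inv_def, ← hadj, ← hdet]

theorem exists_mulVec_eq_smul_of_mem_spectrum {K : Type*} [Field K] [DecidableEq n]
    {M : Matrix n n K} {z : K} (hz : z ∈ spectrum K M) : ∃ v ≠ 0, M *ᵥ v = z • v := by
  rw [← spectrum_toLin', ← Module.End.hasEigenvalue_iff_mem_spectrum] at hz
  obtain ⟨v, hv⟩ := hz.exists_hasEigenvector
  exact ⟨v, hv.2, by simpa using hv.apply_eq_smul⟩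

theorem re_star_dotProduct_map_ofReal_mulVec (A : Matrix n n ℝ) (v : n → ℂ) :
    RCLike.re (star v ⬝ᵥ A.map (algebraMap ℝ ℂ) *ᵥ v) =
      (fun i ↦ (v i).re) ⬝ᵥ A *ᵥ (fun i ↦ (v i).re) +
        (fun i ↦ (v i).im) ⬝ᵥ A *ᵥ (fun i ↦ (v i).im) := by
  simp [dotProduct, mulVec, Finset.mul_sum, ← Finset.sum_add_distrib]

theorem PosDef.map_ofReal {A : Matrix n n ℝ} (hA : A.PosDef) :
    (A.map (algebraMap ℝ ℂ)).PosDef := by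
  have hH : (A.map (algebraMap ℝ ℂ)).IsHermitian := hA.1.map _ fun x ↦ by simp
  refine .of_dotProduct_mulVec_pos hH fun v hv ↦
    RCLike.pos_iff.mpr ⟨?_, hH.im_star_dotProduct_mulVec_self v⟩
  have hnonneg (x : n → ℝ) : 0 ≤ x ⬝ᵥ A *ᵥ x := by
    simpa using hA.posSemidef.dotProduct_mulVec_nonneg x
  have hpos {x : n → ℝ} (hx : x ≠ 0) : 0 < x ⬝ᵥ A *ᵥ x := by
    simpa using hA.dotProduct_mulVec_pos hx
  rw [re_star_dotProduct_map_ofReal_mulVec]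
  obtain hre | him : (fun i ↦ (v i).re) ≠ 0 ∨ (fun i ↦ (v i).im) ≠ 0 := by
    by_contra! h
    exact hv <| funext fun i ↦ Complex.ext (congrFun h.1 i) (congrFun h.2 i)
  · linarith [hpos hre, hnonneg fun i ↦ (v i).im]
  · linarith [hnonneg fun i ↦ (v i).re, hpos him]

section RCLike

variable {𝕜 : Type*} [RCLike 𝕜]

theorem PosDef.schur_complement₂₂ {m : Type*} [Fintype m] [DecidableEq n]
    {A : Matrix m m 𝕜} {B : Matrix m n 𝕜} {D : Matrix n n 𝕜}
    (h : (fromBlocks A B Bᴴ D).PosDef) : (A - B * D⁻¹ * Bᴴ).PosDef := by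
  have hD : D.PosDef := h.submatrix Sum.inr_injective
  have := hD.isUnit.invertible
  refine .of_dotProduct_mulVec_pos ((IsHermitian.fromBlocks₂₂ A B hD.1).mp h.1) fun x hx ↦ ?_
  have hxy : Sum.elim x (-((D⁻¹ * Bᴴ) *ᵥ x)) ≠ 0 := fun h0 ↦
    hx <| funext fun i ↦ congrFun h0 (.inl i)
  have := h.dotProduct_mulVec_pos hxy
  rwa [dotProduct_mulVec, schur_complement_eq₂₂ A B x _ hD.1, add_neg_cancel, dotProduct_zero,
    zero_add, ← dotProduct_mulVec] at this

theorem norm_lt_one_of_mem_spectrum_inv_mul [DecidableEq n] {A S : Matrix n n 𝕜}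
    (hA : A.PosDef) (hS : S.PosSemidef) (hAS : (A - S).PosDef) {z : 𝕜}
    (hz : z ∈ spectrum 𝕜 (A⁻¹ * S)) : ‖z‖ < 1 := by
  obtain ⟨v, hv, hvz⟩ := exists_mulVec_eq_smul_of_mem_spectrum hz
  have hSv : S *ᵥ v = z • (A *ᵥ v) := calc
    S *ᵥ v = A *ᵥ ((A⁻¹ * S) *ᵥ v) := by
      rw [mulVec_mulVec, ← Matrix.mul_assoc,
        mul_nonsing_inv _ ((isUnit_iff_isUnit_det A).mp hA.isUnit), Matrix.one_mul]
    _ = z • (A *ᵥ v) := by rw [hvz, mulVec_smul]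
  refine RCLike.norm_lt_one_of_eq_mul (hS.dotProduct_mulVec_nonneg v) ?_
    (by rw [hSv, dotProduct_smul, smul_eq_mul])
  simpa [sub_mulVec, dotProduct_sub] using hAS.dotProduct_mulVec_pos hv

theorem norm_lt_one_of_mem_spectrum_of_posDef_fromBlocks {m : Type*} [Fintype m]
    [DecidableEq m] [DecidableEq n] {A : Matrix m m 𝕜} {B : Matrix m n 𝕜} {D : Matrix n n 𝕜}
    (h : (fromBlocks A B Bᴴ D).PosDef) {z : 𝕜}
    (hz : z ∈ spectrum 𝕜 (A⁻¹ * B * D⁻¹ * Bᴴ)) : ‖z‖ < 1 := by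
  have hA : A.PosDef := h.submatrix Sum.inl_injective
  have hD : D.PosDef := h.submatrix Sum.inr_injective
  refine norm_lt_one_of_mem_spectrum_inv_mul hA
    (hD.inv.posSemidef.mul_mul_conjTranspose_same B) h.schur_complement₂₂ ?_
  simpa only [Matrix.mul_assoc] using hz

end RCLike

end Matrix

/-- For a symmetric positive definite block matrix `[[Jxx, Jxy], [Jyx, Jyy]]`, the spectral
radius of `Jxx⁻¹ Jxy Jyy⁻¹ Jyx` is strictly less than 1: every complex eigenvalue has
modulus `< 1`. -/
theorem stmt17 {na nb : ℕ}
    (Jxx : Matrix (Fin na) (Fin na) ℝ) (Jxy : Matrix (Fin na) (Fin nb) ℝ)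
    (Jyx : Matrix (Fin nb) (Fin na) ℝ) (Jyy : Matrix (Fin nb) (Fin nb) ℝ)
    (hsym : Jyx = Jxyᵀ)
    (hpd : (Matrix.fromBlocks Jxx Jxy Jyx Jyy).PosDef) :
    ∀ z ∈ spectrum ℂ ((Jxx⁻¹ * Jxy * Jyy⁻¹ * Jyx).map (algebraMap ℝ ℂ)), ‖z‖ < 1 := by
  intro z hz
  subst hsym
  have hT : Jxyᵀ.map (algebraMap ℝ ℂ) = (Jxy.map (algebraMap ℝ ℂ))ᴴ := by
    rw [← conjTranspose_eq_transpose_of_trivial, conjTranspose_map _ fun x ↦ by simp]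
  have hpdℂ := hpd.map_ofReal
  rw [fromBlocks_map, hT] at hpdℂ
  rw [Matrix.map_mul, Matrix.map_mul, Matrix.map_mul, map_nonsing_inv, map_nonsing_inv, hT] at hz
  exact norm_lt_one_of_mem_spectrum_of_posDef_fromBlocks hpdℂ hz
end
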